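/- arXiv:1806.03865 — 11 statements merged into one kernel-verified Lean document; each statement's English description precedes it below -/
import Mathlib

section
/- If v_i and v_j satisfy the c-single-crossing condition in bidder i's signal, α ≥ c, and v_j(s) ≤ α·v_i(s), then for any signal s_i' > s_i (other signals fixed), v_j(s_i', s_{-i}) ≤ α·v_i(s_i', s_{-i}). -/
/-- Approximation propagation: if `v_j ≤ α·v_i` at signal `s` and the valuations
satisfy `c`-single-crossing in bidder `i`'s signal, with `α ≥ c ≥ 1`, then
`v_j ≤ α·v_i` continues to hold at any larger signal `s' > s`. -/
theorem approx_propagation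
    (c α : ℝ) (vi vj : ℕ → ℝ)
    (hc : 1 ≤ c) (hα : c ≤ α)
    (hvi_mono : Monotone vi) (hvj_mono : Monotone vj)
    (hvi_nonneg : ∀ s, 0 ≤ vi s) (hvj_nonneg : ∀ s, 0 ≤ vj s)
    (hsc : ∀ s, vj (s + 1) - vj s ≤ c * (vi (s + 1) - vi s))
    (s s' : ℕ) (happ : vj s ≤ α * vi s) (hss : s < s') :
    vj s' ≤ α * vi s' := by
  have key : ∀ t, s ≤ t → vj t ≤ α * vi t := by
    intro t ht
    induction t, ht using Nat.le_induction with
    | base => exact happ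
    | succ n hn ih =>
      have hd : 0 ≤ vi (n + 1) - vi n := by
        have := hvi_mono (Nat.le_succ n); linarith
      have hca : c * (vi (n + 1) - vi n) ≤ α * (vi (n + 1) - vi n) :=
        mul_le_mul_of_nonneg_right hα hd
      have := hsc n
      linarith
  exact key s' hss.le
end

section
/- (Contrapositive of approximation propagation) If v_i and v_j satisfy the c-single-crossing condition in bidder i's signal, α ≥ c, and v_j(s) > α·v_i(s) at signal s, then for any signal s' < s, v_j(s') > α·v_i(s'). -/
/-- Contrapositive of approximation propagation: if `v_j > α·v_i` at signal `s`
under `c`-single-crossing with `α ≥ c ≥ 1`, then `v_j > α·v_i` at any smaller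
signal `s' < s`. -/
theorem approx_propagation_contrapositive
    (c α : ℝ) (vi vj : ℕ → ℝ)
    (hc : 1 ≤ c) (hα : c ≤ α)
    (hvi_mono : Monotone vi) (hvj_mono : Monotone vj)
    (hvi_nonneg : ∀ s, 0 ≤ vi s) (hvj_nonneg : ∀ s, 0 ≤ vj s)
    (hsc : ∀ s, vj (s + 1) - vj s ≤ c * (vi (s + 1) - vi s))
    (s : ℕ) (hnapp : α * vi s < vj s)
    (s' : ℕ) (hss : s' < s) :
    α * vi s' < vj s' := by
  have step : ∀ t, α * vi (t + 1) < vj (t + 1) → α * vi t < vj t := by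
    intro t h
    have h1 := hsc t
    have hd : 0 ≤ vi (t + 1) - vi t := sub_nonneg.2 (hvi_mono (Nat.le_succ t))
    have h2 : c * (vi (t + 1) - vi t) ≤ α * (vi (t + 1) - vi t) :=
      mul_le_mul_of_nonneg_right hα hd
    nlinarith
  have aux : ∀ d, d ≤ s → α * vi (s - d) < vj (s - d) := by
    intro d
    induction d with
    | zero => simpa using hnapp
    | succ n ih =>
      intro hle
      have hn : n ≤ s := Nat.le_of_succ_le hle
      have heq : s - n = (s - (n + 1)) + 1 := by omega
      apply step
      rw [← heq]
      exact ih hn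
  have := aux (s - s') (Nat.sub_le _ _)
  have : s - (s - s') = s' := by omega
  simpa [this] using aux (s - s') (Nat.sub_le _ _)
end

section
/- If v_i(s) ≥ v_j(s) at signal s and the valuations satisfy c-single-crossing in i's signal with c ≥ 1, then for any α ≥ c and any s' > s, v_j(s') ≤ α·v_i(s'). -/
/-- If `v_i ≥ v_j` at signal `s` and the valuations satisfy `c`-single-crossing
in `i`'s signal with `c ≥ 1`, then for any `α ≥ c` and any `s' > s`,
`v_j(s') ≤ α·v_i(s')`. -/
theorem dominance_propagation
    (c α : ℝ) (vi vj : ℕ → ℝ)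
    (hc : 1 ≤ c) (hα : c ≤ α)
    (hvi_mono : Monotone vi) (hvj_mono : Monotone vj)
    (hvi_nonneg : ∀ s, 0 ≤ vi s) (hvj_nonneg : ∀ s, 0 ≤ vj s)
    (hsc : ∀ s, vj (s + 1) - vj s ≤ c * (vi (s + 1) - vi s))
    (s : ℕ) (hdom : vj s ≤ vi s)
    (s' : ℕ) (hss : s < s') :
    vj s' ≤ α * vi s' := by
  have key : ∀ t, s ≤ t → vj t - vj s ≤ c * (vi t - vi s) := by
    intro t ht
    induction t with
    | zero => simp [Nat.le_zero.mp ht]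
    | succ n ih =>
      rcases Nat.lt_or_ge s (n + 1) with h | h
      · have hsn : s ≤ n := Nat.lt_succ_iff.mp h
        have := ih hsn
        have h2 := hsc n
        nlinarith
      · have : s = n + 1 := le_antisymm ht h
        simp [this]
  have h1 := key s' (le_of_lt hss)
  have h2 : vi s ≤ vi s' := hvi_mono (le_of_lt hss)
  have h3 := hvi_nonneg s
  have h4 := hvi_nonneg s'
  nlinarith
end

section
/- (Key Lemma) Let v_i, v_j, v_ℓ be nonnegative valuations depending on bidder ℓ's signal (other signals fixed), monotone nondecreasing, with c-single-crossing in ℓ's signal (so c·(v_ℓ(t+1) − v_ℓ(t)) ≥ v_j(t+1) − v_j(t) for all t). If α ≥ c and v_j(s_ℓ) ≤ α·v_i(s_ℓ), then for any s_ℓ' ≥ s_ℓ, v_j(s_ℓ') ≤ (α + c)·max(v_i(s_ℓ'), v_ℓ(s_ℓ')). -/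
/-- Key Lemma: valuations `v_i, v_j, v_ℓ` as functions of bidder `ℓ`'s signal,
monotone and nonnegative, with `c`-single-crossing in `ℓ`'s signal. If `α ≥ c`
and `v_j(s_ℓ) ≤ α·v_i(s_ℓ)`, then for any `s_ℓ' ≥ s_ℓ`,
`v_j(s_ℓ') ≤ (α + c)·max(v_i(s_ℓ'), v_ℓ(s_ℓ'))`. -/
theorem key_lemma
    (c α : ℝ) (vi vj vl : ℕ → ℝ)
    (hc : 1 ≤ c) (hα : c ≤ α)
    (hvi_mono : Monotone vi) (hvj_mono : Monotone vj) (hvl_mono : Monotone vl)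
    (hvi_nonneg : ∀ t, 0 ≤ vi t) (hvj_nonneg : ∀ t, 0 ≤ vj t)
    (hvl_nonneg : ∀ t, 0 ≤ vl t)
    (hsc : ∀ t, vj (t + 1) - vj t ≤ c * (vl (t + 1) - vl t))
    (s s' : ℕ) (hss : s ≤ s') (happ : vj s ≤ α * vi s) :
    vj s' ≤ (α + c) * max (vi s') (vl s') := by
  have hc0 : (0:ℝ) ≤ c := le_trans zero_le_one hc
  have hα0 : (0:ℝ) ≤ α := le_trans hc0 hα
  have tele : vj s' - vj s ≤ c * (vl s' - vl s) := by
    induction s' with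
    | zero =>
      interval_cases s
      simp
    | succ n ih =>
      rcases Nat.lt_or_ge s (n+1) with h | h
      · have hn : s ≤ n := Nat.lt_succ_iff.mp h
        have := hsc n
        have := ih hn
        nlinarith [hsc n]
      · have : s = n + 1 := le_antisymm hss h
        subst this
        simp
  set M := max (vi s') (vl s') with hM
  have h1 : vi s' ≤ M := le_max_left _ _
  have h2 : vl s' ≤ M := le_max_right _ _
  have h3 : vi s ≤ vi s' := hvi_mono hss
  have h4 : 0 ≤ vl s := hvl_nonneg s
  nlinarith
end

section
/- There is no monotone deterministic allocation for two bidders with two signals each that always allocates to a bidder whose value is within a factor strictly less than c of the maximum value, in the instance where v_1(0,0)=v_2(0,0)=0, v_1(1,0)=1, v_2(1,0)=c, v_1(0,1)=c, v_2(0,1)=1, v_1(1,1)=v_2(1,1)=c (for c > 1). Formally: for every function x : {0,1}×{0,1} → {1,2} that is monotone (if x(s)=i then x(s')=i whenever s' increases only bidder i's signal), there exists a profile s with v_{x(s)}(s)·α < max(v_1(s), v_2(s)) for every α < c. -/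
lemma fin2_cases (a : Fin 2) : a = 0 ∨ a = 1 := by omega

/-- In the 2-bidder, 2-signal instance with
`v₁ = [[0,c],[1,c]]`, `v₂ = [[0,1],[c,c]]` (indices `(s₁,s₂)`), for `c > 1`,
no monotone deterministic allocation achieves an approximation factor `α < c`:
for every monotone allocation `x` and every `α < c` there is a profile where
`α` times the allocated bidder's value is strictly below the maximum value. -/
theorem no_better_than_c_two_bidders
    (c : ℝ) (hc : 1 < c)
    (v : Fin 2 → Bool → Bool → ℝ)
    (hv : v = fun i s1 s2 =>
      if i = 0 then
        (if s1 then (if s2 then c else 1) else (if s2 then c else 0))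
      else
        (if s1 then c else (if s2 then 1 else 0)))
    (x : Bool → Bool → Fin 2)
    (hmono1 : ∀ s2, x false s2 = 0 → x true s2 = 0)
    (hmono2 : ∀ s1, x s1 false = 1 → x s1 true = 1)
    (α : ℝ) (hα : α < c) :
    ∃ s1 s2, α * v (x s1 s2) s1 s2 < max (v 0 s1 s2) (v 1 s1 s2) := by
  subst hv
  obtain h1 | h1 := fin2_cases (x true false)
  · exact ⟨true, false, by simp [h1, max_eq_right hc.le, hα]⟩
  · obtain h2 | h2 := fin2_cases (x false true)
    · have := hmono1 true h2
      have := hmono2 true h1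
      simp_all
    · exact ⟨false, true, by simp [h2, max_eq_left hc.le, hα]⟩
end

section
/- For two bidders with valuations satisfying c-single-crossing, the two-bidder coloring allocation (which starting from (0,0), repeatedly allocates the argmax bidder at the current profile to all profiles with that bidder's signal increased, then moves to the profile where the losing bidder's signal increases by one) is monotone and allocates at every profile to a bidder whose value c-approximates the maximum value: for all (s_1,s_2), max(v_1(s_1,s_2), v_2(s_1,s_2)) ≤ c·v_{x(s_1,s_2)}(s_1,s_2). -/
noncomputable section
open Classical

/-- The coloringFrontier of the two-bidder coloring algorithm: starting from `(0,0)`,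
at each step, if bidder 1 has the (weakly) largest value at the current
profile, move up in bidder 2's signal (bidder 1 colors its row rightward);
otherwise move right in bidder 1's signal. -/
def coloringFrontier (v1 v2 : ℕ → ℕ → ℝ) : ℕ → ℕ × ℕ
  | 0 => (0, 0)
  | n + 1 =>
    let p := coloringFrontier v1 v2 n
    if v2 p.1 p.2 ≤ v1 p.1 p.2 then (p.1, p.2 + 1) else (p.1 + 1, p.2)

/-- The two-bidder coloring allocation: profile `(s₁,s₂)` is allocated to
bidder 1 (index `0`) iff some coloringFrontier point `(t,s₂)` with `t ≤ s₁` had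
bidder 1 winning there; otherwise to bidder 2 (index `1`).
(Note a coloringFrontier point with coordinate sum `m` is visited exactly at step `m`.) -/
def twoBidderAlloc (v1 v2 : ℕ → ℕ → ℝ) (s1 s2 : ℕ) : Fin 2 :=
  if ∃ t ≤ s1, coloringFrontier v1 v2 (t + s2) = (t, s2) ∧ v2 t s2 ≤ v1 t s2 then 0 else 1

lemma frontier_step (v1 v2 : ℕ → ℕ → ℝ) (n : ℕ) :
    coloringFrontier v1 v2 (n + 1) =
      (if v2 (coloringFrontier v1 v2 n).1 (coloringFrontier v1 v2 n).2 ≤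
          v1 (coloringFrontier v1 v2 n).1 (coloringFrontier v1 v2 n).2 then
        ((coloringFrontier v1 v2 n).1, (coloringFrontier v1 v2 n).2 + 1)
      else ((coloringFrontier v1 v2 n).1 + 1, (coloringFrontier v1 v2 n).2)) := rfl

lemma frontier_sum (v1 v2 : ℕ → ℕ → ℝ) :
    ∀ n, (coloringFrontier v1 v2 n).1 + (coloringFrontier v1 v2 n).2 = n := by
  intro n
  induction n with
  | zero => simp [coloringFrontier]
  | succ n ih =>
    rw [frontier_step]
    split <;> simp <;> omega

lemma frontier_fst_mono (v1 v2 : ℕ → ℕ → ℝ) :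
    Monotone fun n => (coloringFrontier v1 v2 n).1 := by
  apply monotone_nat_of_le_succ
  intro n
  rw [frontier_step]
  split <;> simp

lemma frontier_snd_mono (v1 v2 : ℕ → ℕ → ℝ) :
    Monotone fun n => (coloringFrontier v1 v2 n).2 := by
  apply monotone_nat_of_le_succ
  intro n
  rw [frontier_step]
  split <;> simp

lemma cross_snd (v1 v2 : ℕ → ℕ → ℝ) {N m : ℕ}
    (h : m < (coloringFrontier v1 v2 N).2) :
    ∃ n < N, (coloringFrontier v1 v2 n).2 = m ∧
      v2 (coloringFrontier v1 v2 n).1 m ≤ v1 (coloringFrontier v1 v2 n).1 m ∧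
      coloringFrontier v1 v2 (n + 1) = ((coloringFrontier v1 v2 n).1, m + 1) := by
  induction N with
  | zero => simp [coloringFrontier] at h
  | succ N ih =>
    by_cases hm : m < (coloringFrontier v1 v2 N).2
    · obtain ⟨n, hn, h1, h2, h3⟩ := ih hm
      exact ⟨n, Nat.lt_succ_of_lt hn, h1, h2, h3⟩
    · by_cases hcond : v2 (coloringFrontier v1 v2 N).1 (coloringFrontier v1 v2 N).2 ≤
          v1 (coloringFrontier v1 v2 N).1 (coloringFrontier v1 v2 N).2
      · have hstep := frontier_step v1 v2 N
        rw [if_pos hcond] at hstep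
        rw [hstep] at h
        simp at h
        have hmm : (coloringFrontier v1 v2 N).2 = m := by omega
        refine ⟨N, Nat.lt_succ_self N, hmm, ?_, ?_⟩
        · rw [← hmm]; exact hcond
        · rw [hstep, hmm]
      · have hstep := frontier_step v1 v2 N
        rw [if_neg hcond] at hstep
        rw [hstep] at h
        simp at h
        omega

lemma cross_fst (v1 v2 : ℕ → ℕ → ℝ) {N s : ℕ}
    (h : s < (coloringFrontier v1 v2 N).1) :
    ∃ n < N, (coloringFrontier v1 v2 n).1 = s ∧
      v1 s (coloringFrontier v1 v2 n).2 < v2 s (coloringFrontier v1 v2 n).2 := by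
  induction N with
  | zero => simp [coloringFrontier] at h
  | succ N ih =>
    by_cases hs : s < (coloringFrontier v1 v2 N).1
    · obtain ⟨n, hn, h1, h2⟩ := ih hs
      exact ⟨n, Nat.lt_succ_of_lt hn, h1, h2⟩
    · by_cases hcond : v2 (coloringFrontier v1 v2 N).1 (coloringFrontier v1 v2 N).2 ≤
          v1 (coloringFrontier v1 v2 N).1 (coloringFrontier v1 v2 N).2
      · have hstep := frontier_step v1 v2 N
        rw [if_pos hcond] at hstep
        rw [hstep] at h
        simp at h
        omega
      · have hstep := frontier_step v1 v2 N
        rw [if_neg hcond] at hstep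
        rw [hstep] at h
        simp at h
        have hss : (coloringFrontier v1 v2 N).1 = s := by omega
        refine ⟨N, Nat.lt_succ_self N, hss, ?_⟩
        rw [← hss]
        exact lt_of_not_ge hcond

lemma tel1 {c : ℝ} (v1 v2 : ℕ → ℕ → ℝ)
    (hsc1 : ∀ s1 s2, v2 (s1 + 1) s2 - v2 s1 s2 ≤ c * (v1 (s1 + 1) s2 - v1 s1 s2)) :
    ∀ d t s2, v2 (t + d) s2 - v2 t s2 ≤ c * (v1 (t + d) s2 - v1 t s2) := by
  intro d
  induction d with
  | zero => intro t s2; simp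
  | succ d ih =>
    intro t s2
    have h1 := ih t s2
    have h2 := hsc1 (t + d) s2
    have he : t + (d + 1) = (t + d) + 1 := rfl
    rw [he]
    linarith

lemma tel2 {c : ℝ} (v1 v2 : ℕ → ℕ → ℝ)
    (hsc2 : ∀ s1 s2, v1 s1 (s2 + 1) - v1 s1 s2 ≤ c * (v2 s1 (s2 + 1) - v2 s1 s2)) :
    ∀ d s1 u, v1 s1 (u + d) - v1 s1 u ≤ c * (v2 s1 (u + d) - v2 s1 u) := by
  intro d
  induction d with
  | zero => intro s1 u; simp
  | succ d ih =>
    intro s1 u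
    have h1 := ih s1 u
    have h2 := hsc2 s1 (u + d)
    have he : u + (d + 1) = (u + d) + 1 := rfl
    rw [he]
    linarith

/-- For two bidders with monotone, nonnegative, `c`-single-crossing valuations,
the two-bidder coloring allocation is monotone and at every profile allocates
to a bidder whose value `c`-approximates the maximum value. -/
theorem twoBidderAlloc_monotone_and_c_approx
    (c : ℝ) (hc : 1 ≤ c) (v1 v2 : ℕ → ℕ → ℝ)
    (h1nonneg : ∀ s1 s2, 0 ≤ v1 s1 s2) (h2nonneg : ∀ s1 s2, 0 ≤ v2 s1 s2)
    (h1mono1 : ∀ s1 s2, v1 s1 s2 ≤ v1 (s1 + 1) s2)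
    (h1mono2 : ∀ s1 s2, v1 s1 s2 ≤ v1 s1 (s2 + 1))
    (h2mono1 : ∀ s1 s2, v2 s1 s2 ≤ v2 (s1 + 1) s2)
    (h2mono2 : ∀ s1 s2, v2 s1 s2 ≤ v2 s1 (s2 + 1))
    (hsc1 : ∀ s1 s2, v2 (s1 + 1) s2 - v2 s1 s2 ≤ c * (v1 (s1 + 1) s2 - v1 s1 s2))
    (hsc2 : ∀ s1 s2, v1 s1 (s2 + 1) - v1 s1 s2 ≤ c * (v2 s1 (s2 + 1) - v2 s1 s2)) :
    ((∀ s1 s2, twoBidderAlloc v1 v2 s1 s2 = 0 → twoBidderAlloc v1 v2 (s1 + 1) s2 = 0) ∧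
     (∀ s1 s2, twoBidderAlloc v1 v2 s1 s2 = 1 → twoBidderAlloc v1 v2 s1 (s2 + 1) = 1)) ∧
    (∀ s1 s2, max (v1 s1 s2) (v2 s1 s2) ≤
      c * (if twoBidderAlloc v1 v2 s1 s2 = 0 then v1 s1 s2 else v2 s1 s2)) := by
  -- key: if the condition holds at (s1, s2+1), it holds at (s1, s2)
  have key : ∀ s1 s2, (∃ t ≤ s1, coloringFrontier v1 v2 (t + (s2 + 1)) = (t, s2 + 1) ∧
      v2 t (s2 + 1) ≤ v1 t (s2 + 1)) →
      ∃ t ≤ s1, coloringFrontier v1 v2 (t + s2) = (t, s2) ∧ v2 t s2 ≤ v1 t s2 := by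
    intro s1 s2 ⟨t, ht, hFt, _⟩
    have hlt : s2 < (coloringFrontier v1 v2 (t + (s2 + 1))).2 := by
      rw [hFt]; omega
    obtain ⟨n, hn, h1, h2, h3⟩ := cross_snd v1 v2 hlt
    have hsumn := frontier_sum v1 v2 n
    refine ⟨(coloringFrontier v1 v2 n).1, ?_, ?_, h2⟩
    · have hmono := frontier_fst_mono v1 v2 (show n + 1 ≤ t + (s2 + 1) from hn)
      simp only at hmono
      rw [h3, hFt] at hmono
      exact le_trans hmono ht
    · have hne : (coloringFrontier v1 v2 n).1 + s2 = n := by omega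
      rw [hne]
      exact Prod.ext rfl h1
  refine ⟨⟨?_, ?_⟩, ?_⟩
  · intro s1 s2 h
    unfold twoBidderAlloc at h ⊢
    split at h
    · rename_i hex
      obtain ⟨t, ht, h2⟩ := hex
      rw [if_pos ⟨t, le_trans ht (Nat.le_succ _), h2⟩]
    · exact absurd h (by decide)
  · intro s1 s2 h
    unfold twoBidderAlloc at h ⊢
    split at h
    · exact absurd h (by decide)
    · rename_i hnex
      rw [if_neg (fun hP => hnex (key s1 s2 hP))]
  · intro s1 s2
    by_cases hP : ∃ t ≤ s1, coloringFrontier v1 v2 (t + s2) = (t, s2) ∧ v2 t s2 ≤ v1 t s2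
    · have ha : twoBidderAlloc v1 v2 s1 s2 = 0 := by unfold twoBidderAlloc; rw [if_pos hP]
      rw [if_pos ha]
      obtain ⟨t, ht, _, hw⟩ := hP
      obtain ⟨d, hd⟩ := Nat.le.dest ht
      have htel := tel1 v1 v2 hsc1 d t s2
      rw [hd] at htel
      have hm : v1 t s2 ≤ v1 s1 s2 := by
        rw [← hd]; clear hd htel
        induction d with
        | zero => simp
        | succ d ih => exact le_trans ih (h1mono1 (t + d) s2)
      have hcm : 0 ≤ (c - 1) * v1 t s2 :=
        mul_nonneg (by linarith) (h1nonneg t s2)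
      rw [max_le_iff]
      constructor
      · nlinarith [h1nonneg s1 s2]
      · nlinarith
    · have ha : twoBidderAlloc v1 v2 s1 s2 = 1 := by unfold twoBidderAlloc; rw [if_neg hP]
      have ha0 : ¬ twoBidderAlloc v1 v2 s1 s2 = 0 := by rw [ha]; decide
      rw [if_neg ha0]
      -- show max ≤ c * v2 s1 s2 by finding a point (s1, u), u ≤ s2, where v1 < v2
      have hgoal : ∃ u ≤ s2, v1 s1 u < v2 s1 u := by
        have hsum := frontier_sum v1 v2 (s1 + s2)
        rcases lt_or_ge s1 (coloringFrontier v1 v2 (s1 + s2)).1 with hgt | hle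
        · obtain ⟨n, hn, h1, h2⟩ := cross_fst v1 v2 hgt
          have hsn := frontier_sum v1 v2 n
          exact ⟨(coloringFrontier v1 v2 n).2, by omega, h2⟩
        · have hge : s2 ≤ (coloringFrontier v1 v2 (s1 + s2)).2 := by omega
          rcases eq_or_lt_of_le hge with heq | hlt
          · -- frontier at (s1, s2)
            have hfst : (coloringFrontier v1 v2 (s1 + s2)).1 = s1 := by omega
            by_cases hw : v2 s1 s2 ≤ v1 s1 s2
            · exfalso; apply hP
              refine ⟨s1, le_refl _, ?_, hw⟩
              exact Prod.ext hfst heq.symm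
            · exact ⟨s2, le_refl _, lt_of_not_ge hw⟩
          · exfalso; apply hP
            obtain ⟨n, hn, h1, h2, _⟩ := cross_snd v1 v2 hlt
            have hsn := frontier_sum v1 v2 n
            refine ⟨(coloringFrontier v1 v2 n).1, by omega, ?_, h2⟩
            have hne : (coloringFrontier v1 v2 n).1 + s2 = n := by omega
            rw [hne]
            exact Prod.ext rfl h1
      obtain ⟨u, hu, huv⟩ := hgoal
      obtain ⟨d, hd⟩ := Nat.le.dest hu
      have htel := tel2 v1 v2 hsc2 d s1 u
      rw [hd] at htel
      have hm : v2 s1 u ≤ v2 s1 s2 := by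
        rw [← hd]; clear hd htel
        induction d with
        | zero => simp
        | succ d ih => exact le_trans ih (h2mono2 s1 (u + d))
      have hcm : 0 ≤ (c - 1) * v2 s1 u :=
        mul_nonneg (by linarith) (h2nonneg s1 u)
      rw [max_le_iff]
      constructor
      · nlinarith
      · nlinarith [h2nonneg s1 s2]
end
end

section
/- In the n-bidder instance where each bidder i has signals {0,1} and valuation v_i(s) = 1 if s_j = 1 for all j ≠ i and 0 otherwise, any feasible allocation x (with x_i(s) ∈ [0,1], Σ_i x_i(s) ≤ 1) that is monotone in each bidder's own signal satisfies: Σ_i x_i(e_{-i}) ≤ 1, where e_{-i} is the profile with s_i = 0 and s_j = 1 for all j ≠ i. Consequently, for the prior where s_i = 1 independently with probability ε, the expected welfare of any monotone allocation is at most ε^{n-1}, while the optimal expected welfare exceeds n·ε^{n-1}(1−ε). -/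
/-!
Only the profiles `e` (all signals `1`) and `e_{-i}` (only `s_i = 0`) give bidder `i` positive
value. Monotonicity gives `x_i(e_{-i}) ≤ x_i(e)`, so `Σ_i x_i(e_{-i}) ≤ Σ_i x_i(e) ≤ 1`.
Hence the welfare `ε^n Σ_i x_i(e) + ε^(n-1)(1-ε) Σ_i x_i(e_{-i})` is at most
`ε^n + ε^(n-1)(1-ε) = ε^(n-1)`, whereas the optimum collects `ε^(n-1)(1-ε)` from each of the `n`
profiles `e_{-i}`.
-/

open Finset Function

namespace RandomizedImpossibility

variable {ι : Type*} [DecidableEq ι]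

theorem sum_update_false_le_sum (x : (ι → Bool) → ι → ℝ) (s : Finset ι)
    (hmono : ∀ t i, x (update t i false) i ≤ x (update t i true) i) :
    ∑ i ∈ s, x (update (fun _ => true) i false) i ≤ ∑ i ∈ s, x (fun _ => true) i :=
  sum_le_sum fun i _ => by simpa only [update_eq_self] using hmono (fun _ => true) i

theorem eq_update_of_forall_ne {s : ι → Bool} {i : ι} (h : ∀ j, j ≠ i → s j = true) :
    s = update (fun _ => true) i (s i) := by
  funext j
  by_cases hj : j = i
  · subst hj; simp
  · simp [hj, h j hj]

variable [Fintype ι]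

theorem prod_bernoulli_of_forall_ne (ε : ℝ) {s : ι → Bool} {i : ι}
    (h : ∀ j, j ≠ i → s j = true) :
    ∏ j, (if s j then ε else 1 - ε) = (if s i then ε else 1 - ε) * ε ^ (Fintype.card ι - 1) := by
  rw [Fintype.prod_eq_mul_prod_compl i]
  congr 1
  rw [prod_congr rfl fun j hj => by rw [h j (by simpa using hj), if_pos rfl], prod_const,
    card_compl, card_singleton]

/-- The decidability instance is a parameter so that the lemma also rewrites the instance
`Nat.decidableForallFin` that is found on `Fin n`. -/
theorem sum_bernoulli_mul_indicator (ε : ℝ) (y : (ι → Bool) → ℝ) (i : ι)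
    [∀ s : ι → Bool, Decidable (∀ j, j ≠ i → s j = true)] :
    ∑ s : ι → Bool, (∏ j, if s j then ε else 1 - ε) *
        (y s * if ∀ j, j ≠ i → s j = true then 1 else 0) =
      ε ^ (Fintype.card ι - 1) *
        (ε * y (fun _ => true) + (1 - ε) * y (update (fun _ => true) i false)) := by
  have hne : (fun _ => true) ≠ update (fun _ : ι => true) i false :=
    fun h => by simpa using congrFun h i
  rw [Fintype.sum_eq_add _ _ hne]
  · have hall : ∀ j, j ≠ i → update (fun _ => true) i false j = true := fun j hj => by simp [hj]
    rw [prod_bernoulli_of_forall_ne ε (s := fun _ => true) (i := i) (fun _ _ => rfl),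
      prod_bernoulli_of_forall_ne ε hall, if_pos (fun _ _ => rfl), if_pos hall, update_self]
    simp only [if_true, Bool.false_eq_true, if_false]
    ring
  · rintro s ⟨hs_true, hs_false⟩
    split_ifs with hs
    · have hsi := eq_update_of_forall_ne hs
      cases hsi_val : s i <;> rw [hsi_val] at hsi
      · exact absurd hsi hs_false
      · exact absurd (hsi.trans (update_eq_self i _)) hs_true
    · ring

end RandomizedImpossibility

open RandomizedImpossibility in
theorem randomized_impossibility_no_sc_general
    (n : ℕ) (ε : ℝ) (hε : 0 < ε) (hε1 : ε < 1)
    (v : Fin n → (Fin n → Bool) → ℝ)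
    (hv : ∀ i s, v i s = if ∀ j, j ≠ i → s j = true then 1 else 0)
    (x : (Fin n → Bool) → Fin n → ℝ)
    (hfeas : ∀ s, ∑ i, x s i ≤ 1)
    (hmono : ∀ s i, x (Function.update s i false) i ≤ x (Function.update s i true) i) :
    (∑ i, x (Function.update (fun _ => true) i false) i ≤ 1) ∧
    (∑ s : Fin n → Bool,
        (∏ j, if s j then ε else 1 - ε) * ∑ i, x s i * v i s ≤ ε ^ (n - 1)) ∧
    ((n : ℝ) * ε ^ (n - 1) * (1 - ε) < ε ^ n + n * ε ^ (n - 1) * (1 - ε)) := by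
  have hsum_update : ∑ i, x (update (fun _ => true) i false) i ≤ 1 :=
    (sum_update_false_le_sum x univ hmono).trans (hfeas _)
  refine ⟨hsum_update, ?_, by linarith [pow_pos hε n]⟩
  have hwelfare : ∑ s : Fin n → Bool, (∏ j, if s j then ε else 1 - ε) * ∑ i, x s i * v i s =
      ε ^ (n - 1) * (ε * ∑ i, x (fun _ => true) i +
        (1 - ε) * ∑ i, x (update (fun _ => true) i false) i) := by
    simp only [hv, mul_sum]
    rw [sum_comm, sum_congr rfl fun i _ => sum_bernoulli_mul_indicator ε (x · i) i]
    simp only [Fintype.card_fin, mul_add, sum_add_distrib, ← mul_sum]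
  rw [hwelfare]
  calc ε ^ (n - 1) * (ε * ∑ i, x (fun _ => true) i +
        (1 - ε) * ∑ i, x (update (fun _ => true) i false) i)
      ≤ ε ^ (n - 1) * (ε * 1 + (1 - ε) * 1) := by
        have h1ε : 0 ≤ 1 - ε := sub_nonneg.2 hε1.le
        gcongr
        exact hfeas _
    _ = ε ^ (n - 1) := by ring

/-- Randomized impossibility without single-crossing: `n` bidders, signals in
`{0,1}`, `v_i(s) = 1` iff all other signals are `1`. Any feasible allocation
monotone in each own signal satisfies `Σ_i x_i(e_{-i}) ≤ 1` (where `e_{-i}` has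
`s_i = 0` and all other signals `1`); consequently, under the i.i.d. prior
`Pr[s_i = 1] = ε`, the expected welfare is at most `ε^(n-1)` while the optimal
expected welfare `ε^n + n·ε^(n-1)·(1-ε)` exceeds `n·ε^(n-1)·(1-ε)`. -/
theorem randomized_impossibility_no_sc
    (n : ℕ) (hn : 2 ≤ n) (ε : ℝ) (hε : 0 < ε) (hε1 : ε < 1)
    (v : Fin n → (Fin n → Bool) → ℝ)
    (hv : ∀ i s, v i s = if ∀ j, j ≠ i → s j = true then 1 else 0)
    (x : (Fin n → Bool) → Fin n → ℝ)
    (hx0 : ∀ s i, 0 ≤ x s i) (hx1 : ∀ s i, x s i ≤ 1)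
    (hfeas : ∀ s, ∑ i, x s i ≤ 1)
    (hmono : ∀ s i, x (Function.update s i false) i ≤ x (Function.update s i true) i) :
    (∑ i, x (Function.update (fun _ => true) i false) i ≤ 1) ∧
    (∑ s : Fin n → Bool,
        (∏ j, if s j then ε else 1 - ε) * ∑ i, x s i * v i s ≤ ε ^ (n - 1)) ∧
    ((n : ℝ) * ε ^ (n - 1) * (1 - ε) < ε ^ n + n * ε ^ (n - 1) * (1 - ε)) :=
  randomized_impossibility_no_sc_general n ε hε hε1 v hv x hfeas hmono
end

section
/- For the n-bidder, 2-signal instance with v_i as in the context and the prior where the all-ones profile has probability ε and each profile with exactly one zero-coordinate has probability (1−ε)/n, any monotone feasible allocation has expected welfare at most 1/n + 1/c + ε, while the optimal expected welfare is at least 1; hence no truthful (monotone) mechanism achieves an approximation factor better than 1/(1/n + 1/c + ε). -/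
/-!
At the all-ones profile every bidder values the item at `1 + 1/c`, so that profile contributes
at most `ε (1 + 1/c)`. At the profile where only bidder `i` has signal `0`, bidder `i` values the
item at `1` and everyone else at `1/c`, so the welfare there is at most `x_i (1 - 1/c) + 1/c`,
where `x_i` is the share of bidder `i`. Monotonicity bounds `x_i` by bidder `i`'s share at the
all-ones profile, and these shares sum to at most `1`; averaging over `i` with weight
`(1 - ε)/n` leaves at most `1/n + (1 - ε)/c`.
-/

open Finset Function

noncomputable section

variable {ι : Type*} [Fintype ι]

theorem sum_mul_ite_le [DecidableEq ι] {x : ι → ℝ} (hx : ∑ j, x j ≤ 1) (i : ι) {a b : ℝ}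
    (hb : 0 ≤ b) : ∑ j, x j * (if j = i then a else b) ≤ x i * (a - b) + b := by
  have hsplit : ∀ j, x j * (if j = i then a else b) =
      x j * b + if j = i then x i * (a - b) else 0 := by
    intro j
    split_ifs with h
    · subst h; ring
    · ring
  rw [sum_congr rfl fun j _ => hsplit j, sum_add_distrib, sum_ite_eq' univ i, if_pos (mem_univ i),
    ← sum_mul]
  linarith [mul_le_of_le_one_left hb hx]

theorem sum_update_false_le_one {x : (ι → Bool) → ι → ℝ} [DecidableEq ι]
    (hfeas : ∀ s, ∑ i, x s i ≤ 1)
    (hmono : ∀ s i, x (update s i false) i ≤ x (update s i true) i) :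
    ∑ i, x (update (fun _ => true) i false) i ≤ 1 := by
  calc ∑ i, x (update (fun _ => true) i false) i ≤ ∑ i, x (fun _ => true) i :=
        sum_le_sum fun i _ => by simpa using hmono (fun _ => true) i
    _ ≤ 1 := hfeas _

def welfare (x : (ι → Bool) → ι → ℝ) (v : ι → (ι → Bool) → ℝ) (s : ι → Bool) : ℝ :=
  ∑ j, x s j * v j s

variable [DecidableEq ι]

def singleCrossingValuation (c : ℝ) (i : ι) (s : ι → Bool) : ℝ :=
  if s i = true then
    (if ∀ j, j ≠ i → s j = true then 1 + 1 / c else 1 / c)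
  else
    (if ∀ j, j ≠ i → s j = true then 1 else 0)

theorem singleCrossingValuation_allOnes (c : ℝ) (j : ι) :
    singleCrossingValuation c j (fun _ => true) = 1 + 1 / c := by
  simp [singleCrossingValuation]

theorem singleCrossingValuation_update_false (c : ℝ) (i j : ι) :
    singleCrossingValuation c j (update (fun _ => true) i false) =
      if j = i then 1 else 1 / c := by
  by_cases h : j = i
  · subst h
    simp +contextual [singleCrossingValuation]
  · have hi : i ≠ j := Ne.symm h
    simp only [singleCrossingValuation, update_apply, h, if_false, if_true]
    exact if_neg fun hall => by simpa using hall i hi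

variable {c : ℝ} {x : (ι → Bool) → ι → ℝ}

theorem welfare_allOnes_le (hc : 0 ≤ c) (hfeas : ∑ j, x (fun _ => true) j ≤ 1) :
    welfare x (singleCrossingValuation c) (fun _ => true) ≤ 1 + 1 / c := by
  simp only [welfare, singleCrossingValuation_allOnes, ← sum_mul]
  exact mul_le_of_le_one_left (by positivity) hfeas

theorem welfare_update_false_le (hc : 0 ≤ c) (i : ι)
    (hfeas : ∑ j, x (update (fun _ => true) i false) j ≤ 1) :
    welfare x (singleCrossingValuation c) (update (fun _ => true) i false) ≤
      x (update (fun _ => true) i false) i * (1 - 1 / c) + 1 / c := by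
  simp only [welfare, singleCrossingValuation_update_false]
  exact sum_mul_ite_le hfeas i (by positivity)

end

theorem expected_welfare_bound_of_le_one {c ε t : ℝ} (n : ℕ) (hc : 1 ≤ c) (hε : 0 ≤ ε)
    (hε1 : ε ≤ 1) (ht : t ≤ 1) :
    ε * (1 + 1 / c) + (1 - ε) / n * ((1 - 1 / c) * t + n * (1 / c)) ≤ 1 / n + 1 / c + ε := by
  have hu0 : 0 ≤ 1 / c := by positivity
  have hu1 : 1 / c ≤ 1 := by rw [div_le_one (by linarith)]; exact hc
  have hεu : ε * (1 / c) ≤ 1 / c := mul_le_of_le_one_left hu0 hε1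
  rcases n.eq_zero_or_pos with rfl | hn
  · simp only [Nat.cast_zero, div_zero, zero_mul, add_zero]
    linarith
  · have hsplit : (1 - ε) / n * ((1 - 1 / c) * t + n * (1 / c)) =
        (1 - ε) * (1 - 1 / c) * t / n + (1 - ε) * (1 / c) := by
      field_simp
    have hp0 : 0 ≤ (1 - ε) * (1 - 1 / c) := mul_nonneg (by linarith) (by linarith)
    have hp1 : (1 - ε) * (1 - 1 / c) ≤ 1 := mul_le_one₀ (by linarith) (by linarith) (by linarith)
    have hfirst : (1 - ε) * (1 - 1 / c) * t / n ≤ 1 / n := by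
      gcongr
      linarith [mul_le_mul_of_nonneg_left ht hp0]
    linarith

theorem randomized_c_lower_bound_general
    (n : ℕ) (c ε : ℝ) (hc : 1 ≤ c) (hε : 0 < ε) (hε1 : ε < 1)
    (v : Fin n → (Fin n → Bool) → ℝ)
    (hv : ∀ i s, v i s =
      if s i = true then
        (if ∀ j, j ≠ i → s j = true then 1 + 1 / c else 1 / c)
      else
        (if ∀ j, j ≠ i → s j = true then 1 else 0))
    (x : (Fin n → Bool) → Fin n → ℝ)
    (hfeas : ∀ s, ∑ i, x s i ≤ 1)
    (hmono : ∀ s i, x (Function.update s i false) i ≤ x (Function.update s i true) i) :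
    (ε * ∑ j, x (fun _ => true) j * v j (fun _ => true) +
      ∑ i, (1 - ε) / n *
        ∑ j, x (Function.update (fun _ => true) i false) j *
              v j (Function.update (fun _ => true) i false)
      ≤ 1 / n + 1 / c + ε) ∧
    (1 : ℝ) ≤ (1 - ε) * 1 + ε * (1 + 1 / c) := by
  have hc0 : 0 < c := by linarith
  refine ⟨?_, by nlinarith [mul_pos hε (one_div_pos.mpr hc0)]⟩
  obtain rfl : v = singleCrossingValuation c := by
    funext i s
    rw [hv, singleCrossingValuation]
    -- on `Fin n` the statement decides `∀ j` by `Nat.decidableForallFin`, not through `Fintype`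
    congr
  change ε * welfare x _ _ + ∑ i, (1 - ε) / n * welfare x _ _ ≤ _
  calc ε * welfare x (singleCrossingValuation c) (fun _ => true) +
        ∑ i, (1 - ε) / n * welfare x (singleCrossingValuation c) (update (fun _ => true) i false)
      ≤ ε * (1 + 1 / c) +
        ∑ i, (1 - ε) / n * (x (update (fun _ => true) i false) i * (1 - 1 / c) + 1 / c) := by
        gcongr with i
        · exact welfare_allOnes_le hc0.le (hfeas _)
        · exact welfare_update_false_le hc0.le i (hfeas _)
    _ = ε * (1 + 1 / c) + (1 - ε) / n *
          ((1 - 1 / c) * ∑ i, x (update (fun _ => true) i false) i + n * (1 / c)) := by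
        simp [← mul_sum, sum_add_distrib, mul_comm]
    _ ≤ 1 / n + 1 / c + ε :=
        expected_welfare_bound_of_le_one n hc hε.le hε1.le (sum_update_false_le_one hfeas hmono)

/-- Randomized `c` lower bound with `c`-single-crossing: with the valuations of
the 2-signal instance and the prior placing probability `ε` on the all-ones
profile and `(1-ε)/n` on each profile with exactly one zero coordinate,
any monotone feasible allocation has expected welfare at most
`1/n + 1/c + ε`, while the optimal expected welfare
`(1-ε)·1 + ε·(1 + 1/c)` is at least `1`. -/
theorem randomized_c_lower_bound
    (n : ℕ) (hn : 2 ≤ n) (c ε : ℝ) (hc : 1 ≤ c) (hε : 0 < ε) (hε1 : ε < 1)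
    (v : Fin n → (Fin n → Bool) → ℝ)
    (hv : ∀ i s, v i s =
      if s i = true then
        (if ∀ j, j ≠ i → s j = true then 1 + 1 / c else 1 / c)
      else
        (if ∀ j, j ≠ i → s j = true then 1 else 0))
    (x : (Fin n → Bool) → Fin n → ℝ)
    (hx0 : ∀ s i, 0 ≤ x s i)
    (hfeas : ∀ s, ∑ i, x s i ≤ 1)
    (hmono : ∀ s i, x (Function.update s i false) i ≤ x (Function.update s i true) i) :
    (ε * ∑ j, x (fun _ => true) j * v j (fun _ => true) +
      ∑ i, (1 - ε) / n *
        ∑ j, x (Function.update (fun _ => true) i false) j *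
              v j (Function.update (fun _ => true) i false)
      ≤ 1 / n + 1 / c + ε) ∧
    (1 : ℝ) ≤ (1 - ε) * 1 + ε * (1 + 1 / c) :=
  randomized_c_lower_bound_general n c ε hc hε hε1 v hv x hfeas hmono
end

section
/- Let v : (∏_i Fin(k_i+1)) → ℝ≥0 be monotone nondecreasing in each coordinate and d-concave: for all coordinates j and profiles s ≤ s' (coordinatewise in all coordinates except j, with s_j = s'_j), d·(v(s_{-j}, t+1) − v(s_{-j}, t)) ≥ v(s'_{-j}, t+1) − v(s'_{-j}, t) for all t. Let s be a profile and A, B a partition of the coordinates ≠ i*, and let a = v(profile with coordinates in A ∪ {i*} set to s and coordinates in B set to 0) and b = v(profile with coordinates in B ∪ {i*} set to s and coordinates in A set to 0). Then a + b ≥ (2/(d+1))·v(s) (assuming v(0⃗) ≥ 0). -/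
/-!
Let `z` be the profile that keeps only the coordinate `i*` of `s`, and `x`, `y` the profiles that
keep `A ∪ {i*}`, resp. `B ∪ {i*}`. Turning on the coordinates of `B` raises `v` from `x` to `v s`
and from `z` to `v y`; since `z ≤ x`, `d`-concavity, telescoped over one coordinate at a time and
one unit at a time, gives `v s - v x ≤ d (v y - v z)`, and symmetrically
`v s - v y ≤ d (v x - v z)`. Adding the two and dropping `-2 d v z ≤ 0` gives
`2 v s ≤ (d + 1) (v x + v y)`.
-/

open Function Finset

section DConcave

variable {ι : Type*} [DecidableEq ι]

theorem Finset.piecewise_piecewise_eq_piecewise_union {β : Type*} (A B : Finset ι)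
    (f g : ι → β) : B.piecewise f (A.piecewise f g) = (A ∪ B).piecewise f g := by
  ext j
  by_cases hA : j ∈ A <;> by_cases hB : j ∈ B <;> simp [hA, hB]

def DConcave (d : ℝ) (v : (ι → ℕ) → ℝ) : Prop :=
  ∀ (j : ι) (s s' : ι → ℕ), (∀ l, l ≠ j → s l ≤ s' l) → ∀ t : ℕ,
    v (update s' j (t + 1)) - v (update s' j t) ≤ d * (v (update s j (t + 1)) - v (update s j t))

variable {d : ℝ} {v : (ι → ℕ) → ℝ}

theorem DConcave.sub_update_zero_le (hv : DConcave d v) {p q : ι → ℕ} {j : ι}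
    (hpq : ∀ l, l ≠ j → p l ≤ q l) (t : ℕ) :
    v (update q j t) - v (update q j 0) ≤ d * (v (update p j t) - v (update p j 0)) := by
  induction t with
  | zero => simp
  | succ t ih => linarith [hv j p q hpq t]

theorem DConcave.sub_piecewise_le (hv : DConcave d v) (s : ι → ℕ) {C : Finset ι}
    {p q : ι → ℕ} (hpq : p ≤ q) (hp : ∀ j ∈ C, p j = 0) (hq : ∀ j ∈ C, q j = 0) :
    v (C.piecewise s q) - v q ≤ d * (v (C.piecewise s p) - v p) := by
  induction C using Finset.induction_on with
  | empty => simp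
  | insert j C hj ih =>
    specialize ih (fun l hl => hp l (mem_insert_of_mem hl))
      (fun l hl => hq l (mem_insert_of_mem hl))
    have hupdate_zero : ∀ f : ι → ℕ, f j = 0 → update (C.piecewise s f) j 0 = C.piecewise s f :=
      fun f hf => update_eq_self_iff.2 (by rw [piecewise_eq_of_notMem _ _ _ hj, hf])
    have hstep := hv.sub_update_zero_le (j := j) (t := s j)
      (fun l _ => piecewise_le_piecewise C (le_refl s) hpq l)
    rw [hupdate_zero q (hq j (mem_insert_self j C)), hupdate_zero p (hp j (mem_insert_self j C))]
      at hstep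
    rw [piecewise_insert, piecewise_insert]
    linarith

theorem DConcave.sub_piecewise_union_le (hv : DConcave d v) (s : ι → ℕ) {A B : Finset ι}
    (hAB : Disjoint A B) {z : ι → ℕ} (hzA : ∀ j ∈ A, z j = 0) (hzB : ∀ j ∈ B, z j = 0) :
    v ((A ∪ B).piecewise s z) - v (A.piecewise s z) ≤ d * (v (B.piecewise s z) - v z) := by
  have hz_le : z ≤ A.piecewise s z := fun j => by
    by_cases hj : j ∈ A <;> simp [hj, hzA]
  have hzB' : ∀ j ∈ B, A.piecewise s z j = 0 := fun j hj => by
    rw [piecewise_eq_of_notMem _ _ _ (disjoint_right.1 hAB hj), hzB j hj]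
  rw [← piecewise_piecewise_eq_piecewise_union]
  exact hv.sub_piecewise_le s hz_le hzB hzB'

theorem DConcave.two_mul_le_mul_add (hv : DConcave d v) (hd : 0 ≤ d) (s : ι → ℕ)
    {A B : Finset ι} (hAB : Disjoint A B) {z : ι → ℕ} (hz : 0 ≤ v z)
    (hzA : ∀ j ∈ A, z j = 0) (hzB : ∀ j ∈ B, z j = 0) :
    2 * v ((A ∪ B).piecewise s z) ≤ (d + 1) * (v (A.piecewise s z) + v (B.piecewise s z)) := by
  have hA := hv.sub_piecewise_union_le s hAB hzA hzB
  have hB := hv.sub_piecewise_union_le s hAB.symm hzB hzA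
  rw [union_comm] at hB
  nlinarith [mul_nonneg hd hz]

end DConcave

theorem d_concave_two_orderings_general
    (n : ℕ) (v : (Fin n → ℕ) → ℝ) (d : ℝ) (hd : 1 ≤ d)
    (hnonneg : ∀ s, 0 ≤ v s)
    (hconc : ∀ (j : Fin n) (s s' : Fin n → ℕ), (∀ l, l ≠ j → s l ≤ s' l) →
      ∀ t : ℕ,
        v (Function.update s' j (t + 1)) - v (Function.update s' j t) ≤
          d * (v (Function.update s j (t + 1)) - v (Function.update s j t)))
    (s : Fin n → ℕ) (istar : Fin n) (A B : Finset (Fin n))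
    (hAB : A ∪ B = Finset.univ.erase istar) (hdisj : Disjoint A B) :
    2 / (d + 1) * v s ≤
      v (fun j => if j ∈ A ∨ j = istar then s j else 0) +
      v (fun j => if j ∈ B ∨ j = istar then s j else 0) := by
  set z : Fin n → ℕ := fun j => if j = istar then s j else 0
  have hz_vanish : ∀ C ⊆ A ∪ B, ∀ j ∈ C, z j = 0 := fun C hC j hj => by
    have := hC hj
    rw [hAB] at this
    simp [z, ne_of_mem_erase this]
  have hprofile : ∀ C : Finset (Fin n),
      (fun j => if j ∈ C ∨ j = istar then s j else 0) = C.piecewise s z := fun C => by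
    ext j
    by_cases hj : j ∈ C <;> simp [z, hj]
  have hs : (A ∪ B).piecewise s z = s := by
    ext j
    by_cases hj : j = istar <;> simp [hAB, z, hj]
  have key := DConcave.two_mul_le_mul_add hconc (by linarith) s hdisj (hnonneg z)
    (hz_vanish A subset_union_left) (hz_vanish B subset_union_right)
  rw [hs, ← hprofile, ← hprofile] at key
  rw [div_mul_eq_mul_div, div_le_iff₀ (by linarith)]
  linarith

/-- For a nonnegative, coordinatewise monotone, `d`-concave valuation `v` on a
product signal space, a profile `s`, a distinguished coordinate `i*`, and a
partition `A, B` of the remaining coordinates: the values at the two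
intermediate profiles (coordinates of `A ∪ {i*}` set to `s`, rest zero; and
coordinates of `B ∪ {i*}` set to `s`, rest zero) sum to at least
`(2/(d+1))·v(s)`. -/
theorem d_concave_two_orderings
    (n : ℕ) (v : (Fin n → ℕ) → ℝ) (d : ℝ) (hd : 1 ≤ d)
    (hnonneg : ∀ s, 0 ≤ v s) (hmono : Monotone v)
    (hconc : ∀ (j : Fin n) (s s' : Fin n → ℕ), (∀ l, l ≠ j → s l ≤ s' l) →
      ∀ t : ℕ,
        v (Function.update s' j (t + 1)) - v (Function.update s' j t) ≤
          d * (v (Function.update s j (t + 1)) - v (Function.update s j t)))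
    (s : Fin n → ℕ) (istar : Fin n) (A B : Finset (Fin n))
    (hAB : A ∪ B = Finset.univ.erase istar) (hdisj : Disjoint A B) :
    2 / (d + 1) * v s ≤
      v (fun j => if j ∈ A ∨ j = istar then s j else 0) +
      v (fun j => if j ∈ B ∨ j = istar then s j else 0) :=
  d_concave_two_orderings_general n v d hd hnonneg hconc s istar A B hAB hdisj
end

section
/- (3-bidder impossibility core) Consider 3 bidders with signal space {0,1,2}×{0,1}×{0,1}. Suppose a deterministic allocation x is monotone (if x(s)=i then x(s')=i whenever s' increases only bidder i's signal) and suppose the allocation must satisfy: x(2,0,0)=2 (bidder 2 required), x(1,1,0) ∈ {1,3} (not bidder 2), and x(0,1,1)=1 (bidder 1 required). Then a contradiction follows: monotonicity forces x(2,1,0)=2 from x(2,0,0)=2, so x(1,1,0)≠1 (else x(2,1,0)=1); hence x(1,1,0)=3, forcing x(1,1,1)=3; but x(0,1,1)=1 forces x(1,1,1)=1, contradiction. Formally: no monotone x : {0,1,2}×{0,1}×{0,1} → {1,2,3} satisfies x(2,0,0)=2, x(1,1,0) ≠ 2, and x(0,1,1)=1. -/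
/-- 3-bidder impossibility core: signals `{0,1,2}×{0,1}×{0,1}`, bidders
`0,1,2` (paper's bidders `1,2,3`). No allocation that is monotone (bidder `0`
in `s₁`, bidder `1` in `s₂`, bidder `2` in `s₃`) can satisfy
`x(2,0,0) = bidder 1`, `x(1,1,0) ≠ bidder 1`, and `x(0,1,1) = bidder 0`. -/
theorem three_bidder_impossibility_core
    (x : Fin 3 → Bool → Bool → Fin 3)
    (hm0 : ∀ (s1 : Fin 3) (s2 s3 : Bool) (s1' : Fin 3),
      s1 ≤ s1' → x s1 s2 s3 = 0 → x s1' s2 s3 = 0)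
    (hm1 : ∀ (s1 : Fin 3) (s3 : Bool), x s1 false s3 = 1 → x s1 true s3 = 1)
    (hm2 : ∀ (s1 : Fin 3) (s2 : Bool), x s1 s2 false = 2 → x s1 s2 true = 2)
    (h1 : x 2 false false = 1)
    (h2 : x 1 true false ≠ 1)
    (h3 : x 0 true true = 0) :
    False := by
  have h11 : x 1 true true = 0 := hm0 0 true true 1 (by decide) h3
  have h21 : x 2 true false = 1 := hm1 2 false h1
  rcases hx : x 1 true false with ⟨n, hn⟩
  interval_cases n
  · exact absurd (hm0 1 true false 2 (by decide) hx) (by rw [h21]; decide)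
  · exact h2 hx
  · exact absurd (hm2 1 true hx) (by rw [h11]; decide)
end

section
/- Let all bidders have signal space {0,1}, valuations monotone and c-single-crossing, and fix bidders i ≠ j and s_{-ij}. If v_i(s_i=0, s_j=0, s_{-ij}) ≥ v_j(s_i=0, s_j=0, s_{-ij}), then c·v_i(s_i=1, s_j=0, s_{-ij}) ≥ v_j(s_i=1, s_j=0, s_{-ij}). -/
/-- Key step of conflict-freeness of High-if-possible: valuations on `{0,1}^n`
monotone, nonnegative, `c`-single-crossing in coordinate `i`. If at the
profile `s` with `s_i = s_j = 0` bidder `i`'s value dominates bidder `j`'s,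
then at the profile with `s_i = 1, s_j = 0`, `v_j ≤ c·v_i`. -/
theorem high_if_possible_key_step
    (n : ℕ) (c : ℝ) (hc : 1 ≤ c)
    (vi vj : (Fin n → Bool) → ℝ)
    (hvi_mono : Monotone vi) (hvj_mono : Monotone vj)
    (hvi_nonneg : ∀ s, 0 ≤ vi s) (hvj_nonneg : ∀ s, 0 ≤ vj s)
    (i j : Fin n) (hij : i ≠ j)
    (hsc : ∀ t : Fin n → Bool,
      vj (Function.update t i true) - vj (Function.update t i false) ≤
        c * (vi (Function.update t i true) - vi (Function.update t i false)))
    (s : Fin n → Bool) (hsi : s i = false) (hsj : s j = false)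
    (hdom : vj s ≤ vi s) :
    vj (Function.update s i true) ≤ c * vi (Function.update s i true) := by
  have hupd : Function.update s i false = s := by
    funext k; by_cases h : k = i
    · subst h; simp [hsi]
    · simp [Function.update_of_ne h]
  have h1 := hsc s
  rw [hupd] at h1
  have h2 := hvi_nonneg s
  nlinarith [h1, h2, hdom]
end
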